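/- arXiv:1207.6595 — 3 statements merged into one kernel-verified Lean document; each statement's English description precedes it below -/
import Mathlib

section
/- For all ordinals β and γ: if β ≤ ℓγ then e(β) ≤ γ, where e(ξ) = −1 + ω^ξ and ℓ is the end-logarithm. -/
/-- The end-logarithm: for ξ > 0 the unique δ with ξ = α + ω^δ; ℓ0 = 0. -/
noncomputable def ell (ξ : Ordinal) : Ordinal :=
  sInf {β : Ordinal | ∃ α : Ordinal, ξ = α + Ordinal.omega0 ^ β}

/-- e(ξ) = −1 + ω^ξ. -/
noncomputable def e (ξ : Ordinal) : Ordinal := Ordinal.omega0 ^ ξ - 1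

/-! Every nonzero ordinal `γ` ends in a term `ω ^ δ`, i.e. `γ = α + ω ^ δ`: peel off the leading
power `ω ^ log γ`, which the remainder cannot absorb, and recurse on the remainder. Hence the
infimum defining `ℓ γ` is attained, so `ω ^ ℓ γ ≤ γ`, and `e β ≤ ω ^ β ≤ ω ^ ℓ γ ≤ γ`. For `γ = 0`
the defining set is empty, so `ℓ 0 = 0` and `e 0 = 0`. -/

open Ordinal

theorem Ordinal.exists_eq_add_omega0_opow {γ : Ordinal} (hγ : γ ≠ 0) :
    ∃ δ α : Ordinal, γ = α + ω ^ δ := by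
  induction γ using WellFoundedLT.induction with
  | _ γ IH =>
    have hle : ω ^ log ω γ ≤ γ := opow_log_le_self ω hγ
    have hlt : γ < ω ^ log ω γ * ω := opow_succ ω _ ▸ lt_opow_succ_log_self one_lt_omega0 γ
    generalize log ω γ = l at hle hlt
    obtain ⟨ρ, rfl⟩ := exists_add_of_le hle
    rcases eq_or_ne ρ 0 with rfl | hρ0
    · exact ⟨l, 0, by rw [add_zero, zero_add]⟩
    -- `ρ` cannot absorb `ω ^ l`, or else `ω ^ l * ω ≤ ρ ≤ γ`
    have hρlt : ρ < ω ^ l + ρ := by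
      by_contra! hρle
      have habsorb : ω ^ l + ρ = ρ := le_antisymm hρle le_add_self
      exact hlt.not_ge ((add_eq_right_iff_mul_omega0_le.1 habsorb).trans le_add_self)
    obtain ⟨δ, α, rfl⟩ := IH ρ hρlt hρ0
    exact ⟨δ, ω ^ l + α, (add_assoc _ _ _).symm⟩

theorem ell_zero : ell 0 = 0 := by
  have hempty : {β : Ordinal | ∃ α : Ordinal, 0 = α + ω ^ β} = ∅ := by
    refine Set.eq_empty_iff_forall_notMem.2 fun β ⟨α, h⟩ ↦ ?_
    exact (opow_pos β omega0_pos).ne' (add_eq_zero_iff.1 h.symm).2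
  rw [ell, hempty, Ordinal.sInf_empty]

theorem exists_eq_add_omega0_opow_ell {γ : Ordinal} (hγ : γ ≠ 0) : ∃ α, γ = α + ω ^ ell γ :=
  csInf_mem (Ordinal.exists_eq_add_omega0_opow hγ)

theorem omega0_opow_ell_le {γ : Ordinal} (hγ : γ ≠ 0) : ω ^ ell γ ≤ γ := by
  obtain ⟨α, hα⟩ := exists_eq_add_omega0_opow_ell hγ
  exact le_add_self.trans_eq hα.symm

theorem e_zero : e 0 = 0 := by rw [e, opow_zero, Ordinal.sub_self]

/-- If β ≤ ℓ γ then e β ≤ γ. -/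
theorem e_le_of_le_ell (β γ : Ordinal) (h : β ≤ ell γ) : e β ≤ γ := by
  rcases eq_or_ne γ 0 with rfl | hγ
  · rw [nonpos_iff_eq_zero.1 (h.trans_eq ell_zero), e_zero]
  calc e β ≤ ω ^ β := Ordinal.sub_le_self _ _
    _ ≤ ω ^ ell γ := opow_le_opow_right omega0_pos h
    _ ≤ γ := omega0_opow_ell_le hγ
end

section
/- Let X be a scattered topological space with rank function ρ_X, and let Θ be an ordinal equipped with the initial segment topology (opens = downward closed sets). If f : X → Θ is a d-map (continuous, open, pointwise discrete), then f equals the rank function ρ_X. -/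
/-- Derived set (set of limit points) of `A`. -/
def derivSet {X : Type*} [TopologicalSpace X] (A : Set X) : Set X :=
  {x | ∀ U : Set X, IsOpen U → x ∈ U → ∃ y, y ∈ U ∩ A ∧ y ≠ x}

/-- Iterated Cantor-Bendixson derivative `d^o A`. -/
noncomputable def CBd {X : Type*} [TopologicalSpace X] (A : Set X) (o : Ordinal) : Set X :=
  Ordinal.limitRecOn o A (fun _ ih => derivSet ih)
    (fun o _ ih => ⋂ b : Set.Iio o, ih b.1 b.2)

/-- Cantor-Bendixson rank of a point: least α with x ∉ d^{α+1} X. -/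
noncomputable def rank {X : Type*} [TopologicalSpace X] (x : X) : Ordinal :=
  sInf {α : Ordinal | x ∉ CBd (Set.univ : Set X) (α + 1)}

/-- A space is scattered if every nonempty subset has an isolated point. -/
def Scattered (X : Type*) [TopologicalSpace X] : Prop :=
  ∀ A : Set X, A.Nonempty → ∃ x ∈ A, ∃ U : Set X, IsOpen U ∧ U ∩ A = {x}

/-- A map is pointwise discrete if each of its point-fibers is a discrete subspace. -/
def PointwiseDiscrete {X Y : Type*} [TopologicalSpace X] [TopologicalSpace Y]
    (f : X → Y) : Prop :=
  ∀ y : Y, DiscreteTopology (f ⁻¹' {y})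

/-!
A d-map `f` into an ordinal with the initial segment topology peels off exactly one level of
values per Cantor–Bendixson derivative. Openness of `f` makes every `x` a limit of points of any
smaller value, while continuity together with discreteness of the fibers isolates `x` among the
points of value at least `f x`. Hence the derived set of `f⁻¹{y | y ≥ α}` is `f⁻¹{y | y > α}`,
and transfinite induction gives `d^α X = f⁻¹{y | y ≥ α}`, so the rank of `x` is `f x`.
-/

lemma CBd_zero {X : Type*} [TopologicalSpace X] (A : Set X) : CBd A 0 = A :=
  Ordinal.limitRecOn_zero _ _ _

lemma CBd_add_one {X : Type*} [TopologicalSpace X] (A : Set X) (o : Ordinal) :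
    CBd A (o + 1) = derivSet (CBd A o) :=
  Ordinal.limitRecOn_add_one _ _ _ _

lemma CBd_limit {X : Type*} [TopologicalSpace X] (A : Set X) {o : Ordinal}
    (ho : Order.IsSuccLimit o) : CBd A o = ⋂ b : Set.Iio o, CBd A b.1 :=
  Ordinal.limitRecOn_limit _ _ _ _ ho

section DerivSetPreimage

variable {X Y : Type*} [TopologicalSpace X] {f : X → Y} (S : Set Y)

lemma preimage_strictUpper_subset_derivSet_preimage [Preorder Y]
    (hopen : ∀ U : Set X, IsOpen U → IsLowerSet (f '' U)) :
    f ⁻¹' {y | ∃ z ∈ S, z < y} ⊆ derivSet (f ⁻¹' S) := by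
  rintro x ⟨z, hzS, hzx⟩ U hU hxU
  obtain ⟨w, hwU, rfl⟩ := hopen U hU hzx.le ⟨x, hxU, rfl⟩
  exact ⟨w, ⟨hwU, hzS⟩, fun hwx => hzx.ne (congrArg f hwx)⟩

lemma derivSet_preimage_subset_preimage_strictUpper [PartialOrder Y]
    (hcont : ∀ U : Set Y, IsLowerSet U → IsOpen (f ⁻¹' U))
    (hpd : ∀ y : Y, DiscreteTopology (f ⁻¹' {y})) :
    derivSet (f ⁻¹' S) ⊆ f ⁻¹' {y | ∃ z ∈ S, z < y} := by
  intro x hx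
  by_contra hnot
  obtain ⟨V, hV, hVx⟩ := discreteTopology_subtype_iff'.mp (hpd (f x)) x rfl
  obtain ⟨y, ⟨⟨hyV, hyx⟩, hyS⟩, hne⟩ :=
    hx _ (hV.inter (hcont _ (isLowerSet_Iic (f x)))) ⟨(hVx.ge rfl).1, le_refl (f x)⟩
  have hfy : f y = f x := eq_of_le_of_not_lt hyx fun hlt => hnot ⟨f y, hyS, hlt⟩
  exact hne (hVx.le ⟨hyV, hfy⟩)

lemma derivSet_preimage [PartialOrder Y]
    (hcont : ∀ U : Set Y, IsLowerSet U → IsOpen (f ⁻¹' U))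
    (hopen : ∀ U : Set X, IsOpen U → IsLowerSet (f '' U))
    (hpd : ∀ y : Y, DiscreteTopology (f ⁻¹' {y})) :
    derivSet (f ⁻¹' S) = f ⁻¹' {y | ∃ z ∈ S, z < y} :=
  (derivSet_preimage_subset_preimage_strictUpper S hcont hpd).antisymm
    (preimage_strictUpper_subset_derivSet_preimage S hopen)

end DerivSetPreimage

section InitialSegment

variable {X : Type*} [TopologicalSpace X] {Θ : Ordinal} {f : X → {x : Ordinal // x < Θ}}
  (hcont : ∀ U : Set {x : Ordinal // x < Θ}, IsLowerSet U → IsOpen (f ⁻¹' U))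
  (hopen : ∀ U : Set X, IsOpen U → IsLowerSet (f '' U))
  (hpd : ∀ y : {x : Ordinal // x < Θ}, DiscreteTopology (f ⁻¹' {y}))
include hcont hopen hpd

lemma CBd_univ_eq_preimage (α : Ordinal) :
    CBd (Set.univ : Set X) α = f ⁻¹' {y | α ≤ y.1} := by
  induction α using Ordinal.limitRecOn with
  | zero => simp [CBd_zero]
  | add_one o ih =>
    rw [CBd_add_one, ih, derivSet_preimage _ hcont hopen hpd]
    ext x
    simp only [Set.mem_preimage, Set.mem_ofPred_eq, Order.add_one_le_iff]
    exact ⟨fun ⟨z, hoz, hzx⟩ => hoz.trans_lt hzx,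
      fun hox => ⟨⟨o, hox.trans (f x).2⟩, le_rfl, hox⟩⟩
  | limit o ho ih =>
    ext x
    simp only [CBd_limit _ ho, Set.mem_iInter, Subtype.forall, Set.mem_Iio, Set.mem_preimage,
      Set.mem_ofPred_eq, ho.le_iff_forall_le]
    exact forall₂_congr fun b hb => by rw [ih b hb]; rfl

lemma rank_eq_of_dmap (x : X) : rank x = f x := by
  have hlevels : {α : Ordinal | x ∉ CBd (Set.univ : Set X) (α + 1)} = Set.Ici (f x : Ordinal) := by
    ext α
    simp [CBd_univ_eq_preimage hcont hopen hpd, Order.add_one_le_iff]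
  rw [rank, hlevels, csInf_Ici]

end InitialSegment

theorem dmap_to_initial_segment_eq_rank_general {X : Type*} [TopologicalSpace X]
    (Θ : Ordinal) (f : X → {x : Ordinal // x < Θ})
    (hcont : ∀ U : Set {x : Ordinal // x < Θ}, IsLowerSet U → IsOpen (f ⁻¹' U))
    (hopen : ∀ U : Set X, IsOpen U → IsLowerSet (f '' U))
    (hpd : ∀ y : {x : Ordinal // x < Θ}, DiscreteTopology (f ⁻¹' {y})) :
    ∀ x : X, (f x : Ordinal) = rank x :=
  fun x => (rank_eq_of_dmap hcont hopen hpd x).symm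

/-- Any d-map from a scattered space into an ordinal Θ with the initial segment
topology (opens = downward-closed sets) is the rank function. Continuity and
openness with respect to the initial segment topology are expressed via lower sets. -/
theorem dmap_to_initial_segment_eq_rank {X : Type*} [TopologicalSpace X]
    (hX : Scattered X) (Θ : Ordinal) (f : X → {x : Ordinal // x < Θ})
    (hcont : ∀ U : Set {x : Ordinal // x < Θ}, IsLowerSet U → IsOpen (f ⁻¹' U))
    (hopen : ∀ U : Set X, IsOpen U → IsLowerSet (f '' U))
    (hpd : ∀ y : {x : Ordinal // x < Θ}, DiscreteTopology (f ⁻¹' {y})) :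
    ∀ x : X, (f x : Ordinal) = rank x :=
  dmap_to_initial_segment_eq_rank_general Θ f hcont hopen hpd
end

section
/- Let X = ⟨X, (T_ξ)_{ξ<λ}⟩ and Y = ⟨Y, (S_ξ)_{ξ<λ}⟩ be families of topologies indexed by a limit ordinal λ, both increasing in ξ. If f : X → Y is a d-map from (X, T_ξ) to (Y, S_ξ) for every ξ < λ, then f is a d-map from (X, ⨆_{ξ<λ} T_ξ) to (Y, ⨆_{ξ<λ} S_ξ), where ⨆ denotes the join (supremum) of topologies. -/
/-! In Mathlib's order on topologies the join of the paper is `⨅` (finer = smaller).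

Continuity and discreteness of fibres pass to the join for any family of topologies:
continuity because the join on the codomain is generated by the open sets of its members,
and discreteness because the join is finer than any single member. For openness, an
increasing family is directed, so the neighbourhood filter of the join is the
directed infimum of the neighbourhood filters, and `Filter.map` commutes with such infima. -/

/-- Pointwise discreteness of `f` with respect to an explicit topology `t` on the domain:
every fiber is discrete in the topology induced from `t`. -/
def PointwiseDiscreteT {X Y : Type*} (t : TopologicalSpace X) (f : X → Y) : Prop :=
  ∀ y : Y, @DiscreteTopology (f ⁻¹' {y}) (TopologicalSpace.induced Subtype.val t)

open Topology

theorem continuous_iInf_iInf {ι X Y : Type*} {t : ι → TopologicalSpace X}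
    {s : ι → TopologicalSpace Y} {f : X → Y} (hf : ∀ i, Continuous[t i, s i] f) :
    Continuous[⨅ i, t i, ⨅ i, s i] f :=
  continuous_iInf_rng.2 fun i => continuous_iInf_dom (hf i)

theorem isOpenMap_iInf_of_directed {ι X Y : Type*} [Nonempty ι] {t : ι → TopologicalSpace X}
    {s : ι → TopologicalSpace Y} {f : X → Y} (ht : Directed (· ≥ ·) t)
    (hf : ∀ i, @IsOpenMap X Y (t i) (s i) f) :
    @IsOpenMap X Y (⨅ i, t i) (⨅ i, s i) f := by
  refine (@isOpenMap_iff_nhds_le X Y f (⨅ i, t i) (⨅ i, s i)).2 fun x => ?_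
  have hdir : Directed (· ≥ ·) fun i => @nhds X (t i) x :=
    ht.mono_comp (· ≥ ·) (g := fun t => @nhds X t x) fun _ _ h => nhds_mono h
  calc @nhds Y (⨅ i, s i) (f x) = ⨅ i, @nhds Y (s i) (f x) := nhds_iInf
    _ ≤ ⨅ i, (@nhds X (t i) x).map f :=
      iInf_mono fun i => (@isOpenMap_iff_nhds_le X Y f (t i) (s i)).1 (hf i) x
    _ = (⨅ i, @nhds X (t i) x).map f := (Filter.map_iInf_eq hdir).symm
    _ = (@nhds X (⨅ i, t i) x).map f := by rw [nhds_iInf]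

theorem PointwiseDiscreteT.mono {X Y : Type*} {t t' : TopologicalSpace X} {f : X → Y}
    (hf : PointwiseDiscreteT t' f) (h : t ≤ t') : PointwiseDiscreteT t f := fun y =>
  @DiscreteTopology.mk _ (.induced Subtype.val t)
    (le_bot_iff.1 ((induced_mono h).trans (@DiscreteTopology.eq_bot _ _ (hf y)).le))

theorem dmap_join_general {X Y : Type*} (l : Ordinal) (hl : Order.IsSuccLimit l)
    (T : ∀ ξ : Ordinal, ξ < l → TopologicalSpace X)
    (S : ∀ ξ : Ordinal, ξ < l → TopologicalSpace Y)
    (hT : ∀ (ξ ζ : Ordinal) (hξ : ξ < l) (hζ : ζ < l), ξ ≤ ζ →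
      ∀ U : Set X, (T ξ hξ).IsOpen U → (T ζ hζ).IsOpen U)
    (f : X → Y)
    (hd : ∀ (ξ : Ordinal) (hξ : ξ < l),
      @Continuous X Y (T ξ hξ) (S ξ hξ) f ∧
      @IsOpenMap X Y (T ξ hξ) (S ξ hξ) f ∧
      PointwiseDiscreteT (T ξ hξ) f) :
    @Continuous X Y (⨅ b : Set.Iio l, T b.1 b.2) (⨅ b : Set.Iio l, S b.1 b.2) f ∧
    @IsOpenMap X Y (⨅ b : Set.Iio l, T b.1 b.2) (⨅ b : Set.Iio l, S b.1 b.2) f ∧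
    PointwiseDiscreteT (⨅ b : Set.Iio l, T b.1 b.2) f := by
  let zero : Set.Iio l := ⟨0, hl.pos⟩
  have : Nonempty (Set.Iio l) := ⟨zero⟩
  have hanti : Antitone fun b : Set.Iio l => T b.1 b.2 :=
    fun b c hbc => hT b c b.2 c.2 hbc
  exact ⟨continuous_iInf_iInf fun b => (hd b.1 b.2).1,
    isOpenMap_iInf_of_directed hanti.directed_ge fun b => (hd b.1 b.2).2.1,
    (hd 0 hl.pos).2.2.mono (iInf_le _ zero)⟩

/-- If `f` is a d-map `(X, T_ξ) → (Y, S_ξ)` for each ξ below a limit ordinal λ, with both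
families of topologies increasing, then `f` is a d-map between the join topologies.
(`⨅` in Mathlib's order on topologies is the join: the least topology containing all
the given ones.) -/
theorem dmap_join {X Y : Type*} (l : Ordinal) (hl : Order.IsSuccLimit l)
    (T : ∀ ξ : Ordinal, ξ < l → TopologicalSpace X)
    (S : ∀ ξ : Ordinal, ξ < l → TopologicalSpace Y)
    (hT : ∀ (ξ ζ : Ordinal) (hξ : ξ < l) (hζ : ζ < l), ξ ≤ ζ →
      ∀ U : Set X, (T ξ hξ).IsOpen U → (T ζ hζ).IsOpen U)
    (hS : ∀ (ξ ζ : Ordinal) (hξ : ξ < l) (hζ : ζ < l), ξ ≤ ζ →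
      ∀ U : Set Y, (S ξ hξ).IsOpen U → (S ζ hζ).IsOpen U)
    (f : X → Y)
    (hd : ∀ (ξ : Ordinal) (hξ : ξ < l),
      @Continuous X Y (T ξ hξ) (S ξ hξ) f ∧
      @IsOpenMap X Y (T ξ hξ) (S ξ hξ) f ∧
      PointwiseDiscreteT (T ξ hξ) f) :
    @Continuous X Y (⨅ b : Set.Iio l, T b.1 b.2) (⨅ b : Set.Iio l, S b.1 b.2) f ∧
    @IsOpenMap X Y (⨅ b : Set.Iio l, T b.1 b.2) (⨅ b : Set.Iio l, S b.1 b.2) f ∧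
    PointwiseDiscreteT (⨅ b : Set.Iio l, T b.1 b.2) f :=
  dmap_join_general l hl T S hT f hd
end
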